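/- arXiv:0804.3406 — 3 statements merged into one kernel-verified Lean document; each statement's English description precedes it below -/
import Mathlib

section
/- Let Ω = {(x1,x2) ∈ ℝ² : x1 > 1} and u(x1,x2) = x2/(x1 − sgn(x2)). Then u is locally Lipschitz on Ω and satisfies X_{1,u} u = 0 at every point of Ω where x2 ≠ 0, where X_{1,u} = ∂₁ + u ∂₂. -/
noncomputable section

/-- `∂₂ f`. -/
def d2 (f : ℝ × ℝ → ℝ) (p : ℝ × ℝ) : ℝ := fderiv ℝ f p (0, 1)

/-- `∂₁ f`. -/
def d1 (f : ℝ × ℝ → ℝ) (p : ℝ × ℝ) : ℝ := fderiv ℝ f p (1, 0)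

/-- `X_{1,u} f = ∂₁ f + u ∂₂ f`. -/
def X1 (u f : ℝ × ℝ → ℝ) (p : ℝ × ℝ) : ℝ := d1 f p + u p * d2 f p

lemma sign_le_one (z : ℝ) : Real.sign z ≤ 1 := by
  rcases lt_trichotomy z 0 with h | h | h
  · rw [Real.sign_of_neg h]; norm_num
  · rw [h, Real.sign_zero]; norm_num
  · rw [Real.sign_of_pos h]

lemma lem_same {δ M D D' y y' : ℝ} (hδ : 0 < δ) (hD : δ ≤ D) (hD' : δ ≤ D')
    (hy' : |y'| ≤ M) : |y / D - y' / D'| ≤ |y - y'| / δ + M * |D - D'| / δ ^ 2 := by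
  have hD0 : 0 < D := hδ.trans_le hD
  have hD'0 : 0 < D' := hδ.trans_le hD'
  have heq : y / D - y' / D' = (y - y') / D + y' * (D' - D) / (D * D') := by
    field_simp; ring
  calc |y / D - y' / D'| = |(y - y') / D + y' * (D' - D) / (D * D')| := by rw [heq]
    _ ≤ |(y - y') / D| + |y' * (D' - D) / (D * D')| := abs_add_le _ _
    _ = |y - y'| / D + |y'| * |D - D'| / (D * D') := by
        rw [abs_div, abs_div, abs_mul, abs_of_pos hD0, abs_of_pos (mul_pos hD0 hD'0),
          abs_sub_comm D' D]
    _ ≤ |y - y'| / δ + M * |D - D'| / (δ * δ) := by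
        have hM : 0 ≤ M := (abs_nonneg y').trans hy'
        have hD0 : (0:ℝ) ≤ D := le_of_lt (hδ.trans_le hD)
        gcongr
    _ = |y - y'| / δ + M * |D - D'| / δ ^ 2 := by ring_nf

lemma lem_opp {δ D D' y y' : ℝ} (hδ : 0 < δ) (hD : δ ≤ D) (hD' : δ ≤ D')
    (hy : y ≤ 0) (hy' : 0 ≤ y') : |y / D - y' / D'| ≤ |y - y'| / δ := by
  have hD0 : 0 < D := hδ.trans_le hD
  have hD'0 : 0 < D' := hδ.trans_le hD'
  have h1 : |y / D - y' / D'| ≤ |y / D| + |y' / D'| := abs_sub _ _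
  have h2 : |y / D| = -y / D := by rw [abs_div, abs_of_pos hD0, abs_of_nonpos hy]
  have h3 : |y' / D'| = y' / D' := by rw [abs_div, abs_of_pos hD'0, abs_of_nonneg hy']
  have h4 : -y / D ≤ -y / δ := by gcongr; linarith
  have h5 : y' / D' ≤ y' / δ := by gcongr
  have h6 : |y - y'| = -y + y' := by rw [abs_of_nonpos (by linarith)]; ring
  rw [h2, h3] at h1
  rw [h6]
  calc |y / D - y' / D'| ≤ -y / D + y' / D' := h1
    _ ≤ -y / δ + y' / δ := by linarith
    _ = (-y + y') / δ := by ring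

lemma key {δ M x x' y y' : ℝ} (hδ : 0 < δ) (hx : 1 + δ ≤ x) (hx' : 1 + δ ≤ x')
    (hy' : |y'| ≤ M) :
    |y / (x - Real.sign y) - y' / (x' - Real.sign y')| ≤
      |y - y'| / δ + M * |x - x'| / δ ^ 2 := by
  have hM : 0 ≤ M := (abs_nonneg y').trans hy'
  have hD : δ ≤ x - Real.sign y := by have := sign_le_one y; linarith
  have hD' : δ ≤ x' - Real.sign y' := by have := sign_le_one y'; linarith
  have hterm : 0 ≤ M * |x - x'| / δ ^ 2 := by positivity
  rcases le_or_gt y 0 with h1 | h1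
  · rcases le_or_gt 0 y' with h2 | h2
    · have := lem_opp hδ hD hD' h1 h2
      linarith
    · -- both nonpositive / y' < 0, y ≤ 0
      rcases eq_or_lt_of_le h1 with h1e | h1l
      · -- y = 0 : sign y = 0, use opp with swap
        have h0 : Real.sign y = 0 := by rw [h1e, Real.sign_zero]
        have := lem_opp hδ hD' hD (le_of_lt h2) (le_of_eq h1e.symm)
        rw [abs_sub_comm] at this
        rw [abs_sub_comm y' y] at this
        linarith
      · -- y < 0, y' < 0 : same sign -1
        have hsy : Real.sign y = -1 := Real.sign_of_neg h1l
        have hsy' : Real.sign y' = -1 := Real.sign_of_neg h2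
        have := lem_same hδ hD hD' hy' (y := y) (y' := y')
        rw [hsy, hsy'] at this ⊢
        have hdd : x - -1 - (x' - -1) = x - x' := by ring
        rw [hdd] at this
        exact this
  · rcases le_or_gt y' 0 with h2 | h2
    · have := lem_opp hδ hD' hD h2 (le_of_lt h1)
      rw [abs_sub_comm] at this
      rw [abs_sub_comm y' y] at this
      linarith
    · have hsy : Real.sign y = 1 := Real.sign_of_pos h1
      have hsy' : Real.sign y' = 1 := Real.sign_of_pos h2
      have := lem_same hδ hD hD' hy' (y := y) (y' := y')
      rw [hsy, hsy'] at this ⊢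
      have hdd : x - 1 - (x' - 1) = x - x' := by ring
      rw [hdd] at this
      exact this

/-- On `Ω = {x1 > 1}`, the function `u(x1,x2) = x2/(x1 − sgn x2)` is locally Lipschitz
and satisfies `X_{1,u} u = 0` at every point of `Ω` with `x2 ≠ 0`. -/
theorem minimal_graph_example :
    let Ω : Set (ℝ × ℝ) := {p | 1 < p.1}
    let u : ℝ × ℝ → ℝ := fun p => p.2 / (p.1 - Real.sign p.2)
    (∀ p ∈ Ω, ∃ r > (0 : ℝ), ∃ K : NNReal, LipschitzOnWith K u (Metric.ball p r ∩ Ω)) ∧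
    (∀ p ∈ Ω, p.2 ≠ 0 → X1 u u p = 0) := by
  intro Ω u
  constructor
  · -- local Lipschitz
    rintro ⟨a, b⟩ (hp : 1 < a)
    set δ : ℝ := (a - 1) / 2 with hδdef
    have hδ : 0 < δ := by simp only [hδdef]; linarith
    refine ⟨δ, hδ, Real.toNNReal (1 / δ + (|b| + δ) / δ ^ 2), ?_⟩
    apply LipschitzOnWith.of_dist_le_mul
    rintro ⟨x, y⟩ ⟨hq1, _⟩ ⟨x', y'⟩ ⟨hq1', _⟩
    rw [Metric.mem_ball] at hq1 hq1'
    set M : ℝ := |b| + δ with hMdef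
    have hd1 : |x - a| < δ := by
      have : dist x a ≤ dist ((x, y) : ℝ × ℝ) (a, b) := le_max_left _ _
      rw [Real.dist_eq] at this; linarith [lt_of_le_of_lt this hq1]
    have hd2 : |y - b| < δ := by
      have : dist y b ≤ dist ((x, y) : ℝ × ℝ) (a, b) := le_max_right _ _
      rw [Real.dist_eq] at this; linarith [lt_of_le_of_lt this hq1]
    have hd1' : |x' - a| < δ := by
      have : dist x' a ≤ dist ((x', y') : ℝ × ℝ) (a, b) := le_max_left _ _
      rw [Real.dist_eq] at this; linarith [lt_of_le_of_lt this hq1']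
    have hd2' : |y' - b| < δ := by
      have : dist y' b ≤ dist ((x', y') : ℝ × ℝ) (a, b) := le_max_right _ _
      rw [Real.dist_eq] at this; linarith [lt_of_le_of_lt this hq1']
    have hx : 1 + δ ≤ x := by
      have := abs_lt.mp hd1
      simp only [hδdef] at this ⊢; linarith [this.1]
    have hx' : 1 + δ ≤ x' := by
      have := abs_lt.mp hd1'
      simp only [hδdef] at this ⊢; linarith [this.1]
    have hy' : |y'| ≤ M := by
      have h := abs_sub_abs_le_abs_sub y' b
      simp only [hMdef]; linarith [le_of_lt hd2']
    have hk := key hδ hx hx' hy' (y := y)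
    have hK0 : (0:ℝ) ≤ 1 / δ + M / δ ^ 2 := by positivity
    have hcoe : ((Real.toNNReal (1 / δ + M / δ ^ 2) : NNReal) : ℝ) = 1 / δ + M / δ ^ 2 :=
      Real.coe_toNNReal _ hK0
    rw [Real.dist_eq]
    have hdy : |y - y'| ≤ dist ((x, y) : ℝ × ℝ) (x', y') := by
      have : dist y y' ≤ dist ((x, y) : ℝ × ℝ) (x', y') := le_max_right _ _
      rwa [Real.dist_eq] at this
    have hdx : |x - x'| ≤ dist ((x, y) : ℝ × ℝ) (x', y') := by
      have : dist x x' ≤ dist ((x, y) : ℝ × ℝ) (x', y') := le_max_left _ _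
      rwa [Real.dist_eq] at this
    have hdnn : (0:ℝ) ≤ dist ((x, y) : ℝ × ℝ) (x', y') := dist_nonneg
    calc |u (x, y) - u (x', y')|
        ≤ |y - y'| / δ + M * |x - x'| / δ ^ 2 := hk
      _ ≤ dist ((x, y) : ℝ × ℝ) (x', y') / δ +
          M * dist ((x, y) : ℝ × ℝ) (x', y') / δ ^ 2 := by
            have hM0 : (0:ℝ) ≤ M := by simp only [hMdef]; positivity
            gcongr
      _ = (1 / δ + M / δ ^ 2) * dist ((x, y) : ℝ × ℝ) (x', y') := by ring
      _ = ((Real.toNNReal (1 / δ + M / δ ^ 2) : NNReal) : ℝ) *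
            dist ((x, y) : ℝ × ℝ) (x', y') := by rw [hcoe]
  · -- PDE
    rintro ⟨a, b⟩ (hp : 1 < a) (hb : b ≠ 0)
    set s : ℝ := Real.sign b with hsdef
    have hane : a - s ≠ 0 := by
      have := sign_le_one b
      have h2 : -1 ≤ s := by
        rcases lt_trichotomy b 0 with h | h | h
        · rw [hsdef, Real.sign_of_neg h]
        · exact absurd h hb
        · rw [hsdef, Real.sign_of_pos h]; norm_num
      intro h; simp only [hsdef] at h; nlinarith
    set v : ℝ × ℝ → ℝ := fun q => q.2 * (q.1 - s)⁻¹ with hvdef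
    -- u = v near (a, b)
    have heq : u =ᶠ[nhds ((a, b) : ℝ × ℝ)] v := by
      rcases lt_or_gt_of_ne hb with hbneg | hbpos
      · have hopen : IsOpen {q : ℝ × ℝ | q.2 < 0} := isOpen_lt continuous_snd continuous_const
        filter_upwards [hopen.mem_nhds (by simpa using hbneg)] with q hq
        simp only [u, v, div_eq_mul_inv, hsdef, Real.sign_of_neg hq, Real.sign_of_neg hbneg]
      · have hopen : IsOpen {q : ℝ × ℝ | 0 < q.2} := isOpen_lt continuous_const continuous_snd
        filter_upwards [hopen.mem_nhds (by simpa using hbpos)] with q hq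
        simp only [u, v, div_eq_mul_inv, hsdef, Real.sign_of_pos hq, Real.sign_of_pos hbpos]
    -- derivative of v
    have hg : HasFDerivAt (fun q : ℝ × ℝ => q.1 - s)
        (ContinuousLinearMap.fst ℝ ℝ ℝ) ((a, b) : ℝ × ℝ) :=
      (hasFDerivAt_fst).sub_const s
    have hinv : HasFDerivAt (fun q : ℝ × ℝ => (q.1 - s)⁻¹)
        ((-((a - s) ^ 2)⁻¹) • ContinuousLinearMap.fst ℝ ℝ ℝ) ((a, b) : ℝ × ℝ) :=
      (hasDerivAt_inv hane).comp_hasFDerivAt ((a, b) : ℝ × ℝ) hg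
    have hsnd : HasFDerivAt (fun q : ℝ × ℝ => q.2)
        (ContinuousLinearMap.snd ℝ ℝ ℝ) ((a, b) : ℝ × ℝ) := hasFDerivAt_snd
    have hv : HasFDerivAt v
        (b • ((-((a - s) ^ 2)⁻¹) • ContinuousLinearMap.fst ℝ ℝ ℝ) +
          (a - s)⁻¹ • ContinuousLinearMap.snd ℝ ℝ ℝ) ((a, b) : ℝ × ℝ) :=
      hsnd.mul hinv
    have hfd : fderiv ℝ u ((a, b) : ℝ × ℝ) =
        b • ((-((a - s) ^ 2)⁻¹) • ContinuousLinearMap.fst ℝ ℝ ℝ) +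
          (a - s)⁻¹ • ContinuousLinearMap.snd ℝ ℝ ℝ := by
      rw [heq.fderiv_eq, hv.fderiv]
    have hd1 : d1 u ((a, b) : ℝ × ℝ) = b * (-((a - s) ^ 2)⁻¹) := by
      simp [d1, hfd]
    have hd2 : d2 u ((a, b) : ℝ × ℝ) = (a - s)⁻¹ := by
      simp [d2, hfd]
    have hu : u ((a, b) : ℝ × ℝ) = b / (a - s) := rfl
    rw [X1, hd1, hd2, hu]
    field_simp
    ring
end
end

section
/- Let u ∈ C^{1,α}(Ω) (Euclidean Hölder class) and x0 ∈ Ω. Define P¹_{x0}u(x) = u(x0) + e₁(x)·X̃₁u(x0,0) + e₂(x)·X̃₂u(x0,0), where e₁(x)=(x−x0)₁ and ε e₂(x) = (x−x0)₂ − (x−x0)₁ u(x0). Then there exist constants ε₀, C > 0 and a neighborhood U of x0 depending only on the C^{1,α} norm of u, such that for all x ∈ U and all 0 < ε < ε₀, |u(x) − P¹_{x0}u(x)| ≤ C d_{x0,ε}(x,x0)^{1+α}, where d_{x0,ε} is the Riemannian control distance associated to the frozen vector fields {X_{1,x0}, X_{2,x0}, X_{3,x0}}. -/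
/-!
Because `ε ≠ 0`, the frozen polynomial `P¹_{x0}u` is the first-order Taylor polynomial
`u x0 + Du x0 (x - x0)`, so the mean value inequality for the `α`-Hölder differential bounds
`|u x - P¹_{x0}u x|` by `M ‖x - x0‖ ^ (1 + α)`. It remains to bound the Euclidean distance by
the control distance. Along an admissible path whose controls are bounded by `L ≤ 1`, the
`s`-coordinate stays in `[-1, 1]`, so the planar projection `w` of the path satisfies
`‖w'‖ ≤ M ‖w‖ + (2M + 2) L`; Grönwall's inequality then gives `‖x - x0‖ ≤ (2M + 2) e^M L`.
Admissible paths exist (the straight segment, whose `∂_{x2}`-defect is absorbed by the control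
of `ε ∂_{x2}`), so the infimum defining the control distance is not the junk value `sInf ∅ = 0`.
-/

noncomputable section

def ctrlDist (V1 V2 V3 : ℝ × ℝ × ℝ → ℝ × ℝ × ℝ) (p q : ℝ × ℝ × ℝ) : ℝ :=
  sInf {L : ℝ | 0 ≤ L ∧ ∃ γ : ℝ → ℝ × ℝ × ℝ, ∃ a : ℝ → ℝ × ℝ × ℝ,
    γ 0 = p ∧ γ 1 = q ∧
    ∀ t ∈ Set.Icc (0 : ℝ) 1,
      HasDerivAt γ ((a t).1 • V1 (γ t) + (a t).2.1 • V2 (γ t) + (a t).2.2 • V3 (γ t)) t ∧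
      ‖a t‖ ≤ L}

def P1 (u : ℝ × ℝ → ℝ) (Du : ℝ × ℝ → (ℝ × ℝ) →L[ℝ] ℝ) (ε : ℝ) (x0 x : ℝ × ℝ) : ℝ :=
  u x0 + (x.1 - x0.1) * (Du x0 (1, 0) + u x0 * Du x0 (0, 1))
    + ((x.2 - x0.2) - (x.1 - x0.1) * u x0) / ε * (ε * Du x0 (0, 1))

open Set Real

theorem gronwallBound_zero_le {K ε x : ℝ} (hK : 0 ≤ K) (hε : 0 ≤ ε) :
    gronwallBound 0 K ε x ≤ ε * x * exp (K * x) := by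
  rcases hK.eq_or_lt with rfl | hK
  · simp [gronwallBound_K0]
  simp only [gronwallBound_of_K_ne_0 hK.ne', zero_mul, zero_add]
  rw [div_mul_eq_mul_div, div_le_iff₀ hK]
  -- `exp (K x) - 1 ≤ K x exp (K x)` is `1 - K x ≤ exp (-K x)` multiplied by `exp (K x)`
  have h := mul_le_mul_of_nonneg_right (add_one_le_exp (-(K * x))) (exp_pos (K * x)).le
  rw [← exp_add, neg_add_cancel, exp_zero] at h
  nlinarith [mul_nonneg hε (exp_pos (K * x)).le]

theorem norm_le_mul_exp_of_norm_deriv_le {E : Type*} [NormedAddCommGroup E] [NormedSpace ℝ E]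
    {f f' : ℝ → E} {K δ : ℝ} (hK : 0 ≤ K) (hδ : 0 ≤ δ)
    (hf : ∀ t ∈ Icc (0 : ℝ) 1, HasDerivAt f (f' t) t) (h0 : f 0 = 0)
    (bound : ∀ t ∈ Icc (0 : ℝ) 1, ‖f' t‖ ≤ K * ‖f t‖ + δ) :
    ‖f 1‖ ≤ δ * exp K := by
  have h := norm_le_gronwallBound_of_norm_deriv_right_le
    (fun t ht => (hf t ht).continuousAt.continuousWithinAt)
    (fun t ht => (hf t (Ico_subset_Icc_self ht)).hasDerivWithinAt) (show ‖f 0‖ ≤ 0 by simp [h0])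
    (fun t ht => bound t (Ico_subset_Icc_self ht)) 1 (right_mem_Icc.2 zero_le_one)
  simpa using h.trans (gronwallBound_zero_le hK hδ)

theorem norm_sub_sub_fderiv_le_of_holder {E F : Type*} [NormedAddCommGroup E] [NormedSpace ℝ E]
    [NormedAddCommGroup F] [NormedSpace ℝ F] {f : E → F} {f' : E → E →L[ℝ] F} {s : Set E}
    {x₀ x : E} {M α : ℝ} (hs : Convex ℝ s) (hx₀ : x₀ ∈ s) (hx : x ∈ s) (hM : 0 ≤ M)
    (hα : 0 ≤ α) (hf : ∀ y ∈ s, HasFDerivWithinAt f (f' y) s y)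
    (hf' : ∀ y ∈ s, ‖f' y - f' x₀‖ ≤ M * ‖y - x₀‖ ^ α) :
    ‖f x - f x₀ - f' x₀ (x - x₀)‖ ≤ M * ‖x - x₀‖ ^ (1 + α) := by
  have hseg := hs.segment_subset hx₀ hx
  have h := (convex_segment x₀ x).norm_image_sub_le_of_norm_hasFDerivWithin_le'
    (fun y hy => (hf y (hseg hy)).mono hseg)
    (C := M * ‖x - x₀‖ ^ α) (fun y hy => (hf' y (hseg hy)).trans <| by
      gcongr
      exact norm_sub_le_of_mem_segment hy)
    (left_mem_segment ℝ x₀ x) (right_mem_segment ℝ x₀ x)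
  rwa [add_comm, rpow_add' (norm_nonneg _) (by positivity), rpow_one, ← mul_assoc]

section P1

variable {u : ℝ × ℝ → ℝ} {Du : ℝ × ℝ → (ℝ × ℝ) →L[ℝ] ℝ} {ε : ℝ} {x0 : ℝ × ℝ}

theorem P1_eq (hε : ε ≠ 0) (x : ℝ × ℝ) : P1 u Du ε x0 x = u x0 + Du x0 (x - x0) := by
  have hx : x - x0 = (x.1 - x0.1) • ((1 : ℝ), (0 : ℝ)) + (x.2 - x0.2) • ((0 : ℝ), (1 : ℝ)) := by
    ext <;> simp
  rw [P1, hx, map_add, map_smul, map_smul, smul_eq_mul, smul_eq_mul]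
  field_simp
  ring

theorem continuous_P1 (hε : ε ≠ 0) : Continuous (P1 u Du ε x0) := by
  simp only [funext (P1_eq hε)]
  fun_prop

theorem abs_P1_le {M : ℝ} (hε : ε ≠ 0) (hM : |u x0| + ‖Du x0‖ ≤ M) (x : ℝ × ℝ) :
    |P1 u Du ε x0 x| ≤ M * (1 + ‖x - x0‖) := by
  rw [P1_eq hε]
  calc |u x0 + Du x0 (x - x0)| ≤ |u x0| + ‖Du x0‖ * ‖x - x0‖ :=
        (abs_add_le _ _).trans (add_le_add_right ((Du x0).le_opNorm _) _)
    _ ≤ M * (1 + ‖x - x0‖) := by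
        have hDu : ‖Du x0‖ * ‖x - x0‖ ≤ M * ‖x - x0‖ := by
          gcongr
          linarith [abs_nonneg (u x0)]
        linarith [norm_nonneg (Du x0)]

end P1

def frozenField (g : ℝ × ℝ → ℝ) (p : ℝ × ℝ × ℝ) : ℝ × ℝ × ℝ :=
  (1, g (p.1, p.2.1) + p.2.2 ^ 2, 0)

def IsCtrlBound (V1 V2 V3 : ℝ × ℝ × ℝ → ℝ × ℝ × ℝ) (p q : ℝ × ℝ × ℝ) (L : ℝ) : Prop :=
  0 ≤ L ∧ ∃ γ : ℝ → ℝ × ℝ × ℝ, ∃ a : ℝ → ℝ × ℝ × ℝ,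
    γ 0 = p ∧ γ 1 = q ∧
    ∀ t ∈ Icc (0 : ℝ) 1,
      HasDerivAt γ ((a t).1 • V1 (γ t) + (a t).2.1 • V2 (γ t) + (a t).2.2 • V3 (γ t)) t ∧
      ‖a t‖ ≤ L

theorem ctrlDist_eq_sInf (V1 V2 V3 : ℝ × ℝ × ℝ → ℝ × ℝ × ℝ) (p q : ℝ × ℝ × ℝ) :
    ctrlDist V1 V2 V3 p q = sInf {L | IsCtrlBound V1 V2 V3 p q L} :=
  rfl

theorem ctrlDist_nonneg (V1 V2 V3 : ℝ × ℝ × ℝ → ℝ × ℝ × ℝ) (p q : ℝ × ℝ × ℝ) :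
    0 ≤ ctrlDist V1 V2 V3 p q :=
  Real.sInf_nonneg fun _ hL => hL.1

section frozenField

variable {g : ℝ × ℝ → ℝ} {ε : ℝ}

theorem exists_isCtrlBound (hg : Continuous g) (hε : ε ≠ 0) (x y : ℝ × ℝ) :
    ∃ L, IsCtrlBound (frozenField g) (fun _ => (0, ε, 0)) (fun _ => (0, 0, 1))
      (x.1, x.2, 0) (y.1, y.2, 0) L := by
  set d := y - x
  set a : ℝ → ℝ × ℝ × ℝ := fun t => (d.1, (d.2 - d.1 * g ((x + t • d).1, (x + t • d).2)) / ε, 0)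
  obtain ⟨L, hL⟩ := isCompact_Icc.exists_bound_of_continuousOn
    (by fun_prop : Continuous a).continuousOn (s := Icc (0 : ℝ) 1)
  refine ⟨L, (norm_nonneg _).trans (hL 0 (left_mem_Icc.2 zero_le_one)),
    fun t => ((x + t • d).1, (x + t • d).2, 0), a, by simp, by simp [d],
    fun t ht => ⟨?_, hL t ht⟩⟩
  have h : HasDerivAt (fun t : ℝ => x + t • d) d t := by
    simpa using ((hasDerivAt_id t).smul_const d).const_add x
  have h3 := h.hasFDerivAt.fst.prodMk (h.hasFDerivAt.snd.prodMk (hasFDerivAt_const (0 : ℝ) t))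
  convert h3.hasDerivAt using 1
  ext <;> simp [frozenField, a]
  field_simp
  ring

theorem norm_planarVelocity_le {M L a₁ a₂ b s : ℝ} {p x y : ℝ × ℝ} (hM : 0 ≤ M)
    (hb : |b| ≤ M * (1 + ‖p - y‖)) (hε : |ε| ≤ 1) (hxy : ‖x - y‖ ≤ 1) (hL1 : L ≤ 1)
    (ha₁ : |a₁| ≤ L) (ha₂ : |a₂| ≤ L) (hs : |s| ≤ 1) :
    ‖(a₁, a₁ * (b + s ^ 2) + a₂ * ε)‖ ≤ M * ‖p - x‖ + (2 * M + 2) * L := by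
  have hL0 : 0 ≤ L := (abs_nonneg _).trans ha₁
  have hbs : |b + s ^ 2| ≤ M * ‖p - x‖ + 2 * M + 1 := by
    have hpy : ‖p - y‖ ≤ ‖p - x‖ + 1 := by
      linarith [norm_sub_le_norm_sub_add_norm_sub p x y]
    have hs2 : s ^ 2 ≤ 1 := by nlinarith [abs_le.1 hs, sq_abs s]
    calc |b + s ^ 2| ≤ |b| + s ^ 2 := (abs_add_le _ _).trans_eq (by rw [abs_sq])
      _ ≤ M * (1 + (‖p - x‖ + 1)) + 1 := by gcongr; exact hb.trans (by gcongr)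
      _ = M * ‖p - x‖ + 2 * M + 1 := by ring
  have hsnd : |a₁ * (b + s ^ 2) + a₂ * ε| ≤ L * (M * ‖p - x‖ + 2 * M + 2) := by
    calc _ ≤ |a₁| * |b + s ^ 2| + |a₂| * |ε| := by
          rw [← abs_mul, ← abs_mul]; exact abs_add_le _ _
      _ ≤ L * (M * ‖p - x‖ + 2 * M + 1) + L * 1 := by gcongr
      _ = L * (M * ‖p - x‖ + 2 * M + 2) := by ring
  have hw : 0 ≤ M * ‖p - x‖ := by positivity
  rw [Prod.norm_def, norm_eq_abs, norm_eq_abs]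
  exact max_le (by nlinarith) (hsnd.trans (by nlinarith))

theorem norm_sub_le_of_isCtrlBound {M L : ℝ} {x y : ℝ × ℝ} (hM : 0 ≤ M)
    (hg : ∀ p, |g p| ≤ M * (1 + ‖p - y‖)) (hε : |ε| ≤ 1) (hxy : ‖x - y‖ ≤ 1)
    (hL : IsCtrlBound (frozenField g) (fun _ => (0, ε, 0)) (fun _ => (0, 0, 1))
      (x.1, x.2, 0) (y.1, y.2, 0) L) :
    ‖x - y‖ ≤ (2 * M + 2) * exp M * L := by
  obtain ⟨hL0, γ, a, hγ0, hγ1, hγ⟩ := hL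
  have hK : 1 ≤ (2 * M + 2) * exp M := by nlinarith [add_one_le_exp M]
  rcases le_or_gt 1 L with hL1 | hL1
  · nlinarith
  have ha : ∀ t ∈ Icc (0 : ℝ) 1, |(a t).1| ≤ L ∧ |(a t).2.1| ≤ L ∧ |(a t).2.2| ≤ L := by
    intro t ht
    have h := (hγ t ht).2
    exact ⟨(norm_fst_le _).trans h, ((norm_fst_le _).trans (norm_snd_le _)).trans h,
      ((norm_snd_le _).trans (norm_snd_le _)).trans h⟩
  set c : ℝ → ℝ × ℝ := fun t => ((γ t).1, (γ t).2.1)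
  have hc : ∀ t ∈ Icc (0 : ℝ) 1, HasDerivAt (fun s => c s - x)
      ((a t).1, (a t).1 * (g (c t) + (γ t).2.2 ^ 2) + (a t).2.1 * ε) t := by
    intro t ht
    have h := (hγ t ht).1.hasFDerivAt
    simpa [frozenField, c] using (h.fst.prodMk h.snd.fst).hasDerivAt.sub_const x
  have hs : ∀ t ∈ Icc (0 : ℝ) 1, |(γ t).2.2| ≤ 1 := by
    intro t ht
    have h := norm_image_sub_le_of_norm_deriv_le_segment' (f := fun s => (γ s).2.2)
      (fun s hs => by
        simpa [frozenField] using (hγ s hs).1.hasFDerivAt.snd.snd.hasDerivAt.hasDerivWithinAt)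
      (fun s hs => (ha s (Ico_subset_Icc_self hs)).2.2) t ht
    simp only [hγ0, sub_zero, norm_eq_abs] at h
    nlinarith [ht.1, ht.2]
  have hbound : ∀ t ∈ Icc (0 : ℝ) 1,
      ‖((a t).1, (a t).1 * (g (c t) + (γ t).2.2 ^ 2) + (a t).2.1 * ε)‖
        ≤ M * ‖c t - x‖ + (2 * M + 2) * L := fun t ht =>
    norm_planarVelocity_le hM (hg _) hε hxy hL1.le (ha t ht).1 (ha t ht).2.1 (hs t ht)
  have h := norm_le_mul_exp_of_norm_deriv_le hM (by positivity) hc (by simp [c, hγ0]) hbound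
  have hc1 : c 1 - x = y - x := by simp [c, hγ1]
  rw [hc1, norm_sub_rev] at h
  linarith

theorem norm_sub_le_mul_ctrlDist {M : ℝ} {x y : ℝ × ℝ} (hM : 0 ≤ M) (hgc : Continuous g)
    (hg : ∀ p, |g p| ≤ M * (1 + ‖p - y‖)) (hε0 : ε ≠ 0) (hε : |ε| ≤ 1) (hxy : ‖x - y‖ ≤ 1) :
    ‖x - y‖ ≤ (2 * M + 2) * exp M *
      ctrlDist (frozenField g) (fun _ => (0, ε, 0)) (fun _ => (0, 0, 1))
        (x.1, x.2, 0) (y.1, y.2, 0) := by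
  have hK : 0 < (2 * M + 2) * exp M := by positivity
  rw [ctrlDist_eq_sInf, ← div_le_iff₀' hK]
  obtain ⟨L, hL⟩ := exists_isCtrlBound hgc hε0 x y
  exact le_csInf ⟨L, hL⟩ fun L hL =>
    (div_le_iff₀' hK).2 (norm_sub_le_of_isCtrlBound hM hg hε hxy hL)

end frozenField

/-- If `u ∈ C^{1,α}(Ω)` then near any `x0 ∈ Ω`, uniformly for small `ε > 0`,
`|u(x) − P¹_{x0}u(x)| ≤ C d_{x0,ε}(x,x0)^{1+α}`, where `d_{x0,ε}` is the control distance
of the frozen fields `X_{1,x0} = ∂_{x1}+(P¹_{x0}u+s²)∂_{x2}`, `X_{2,x0} = ε∂_{x2}`,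
`X_{3,x0} = ∂_s`, and `ε₀, C, U` depend only on the `C^{1,α}` data of `u`. -/
theorem frozen_taylor_estimate (Ω : Set (ℝ × ℝ)) (hΩ : IsOpen Ω)
    (α : ℝ) (hα : α ∈ Set.Ioo (0 : ℝ) 1)
    (u : ℝ × ℝ → ℝ) (Du : ℝ × ℝ → (ℝ × ℝ) →L[ℝ] ℝ) (M : ℝ)
    (hd : ∀ x ∈ Ω, HasFDerivAt u (Du x) x)
    (hbd : ∀ x ∈ Ω, |u x| + ‖Du x‖ ≤ M)
    (hH : ∀ x ∈ Ω, ∀ y ∈ Ω, ‖Du x - Du y‖ ≤ M * dist x y ^ α)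
    (x0 : ℝ × ℝ) (hx0 : x0 ∈ Ω) :
    ∃ ε0 > (0 : ℝ), ∃ C > (0 : ℝ), ∃ U ∈ nhds x0,
      ∀ ε : ℝ, 0 < ε → ε < ε0 → ∀ x ∈ U ∩ Ω,
        |u x - P1 u Du ε x0 x| ≤
          C * (ctrlDist
              (fun p => (1, P1 u Du ε x0 (p.1, p.2.1) + p.2.2 ^ 2, 0))
              (fun _ => (0, ε, 0)) (fun _ => (0, 0, 1))
              (x.1, x.2, 0) (x0.1, x0.2, 0)) ^ (1 + α) := by
  have hM : 0 ≤ M := (by positivity : 0 ≤ |u x0| + ‖Du x0‖).trans (hbd x0 hx0)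
  obtain ⟨r, hr, hrΩ⟩ := Metric.isOpen_iff.1 hΩ x0 hx0
  set K := (2 * M + 2) * exp M
  refine ⟨1, one_pos, (M + 1) * K ^ (1 + α), by positivity, Metric.ball x0 (min r 1),
    Metric.ball_mem_nhds _ (lt_min hr one_pos), fun ε hε hε1 x ⟨hxU, _⟩ => ?_⟩
  have hxr : x ∈ Metric.ball x0 r := Metric.ball_subset_ball (min_le_left _ _) hxU
  have htaylor : |u x - P1 u Du ε x0 x| ≤ M * ‖x - x0‖ ^ (1 + α) := by
    rw [P1_eq hε.ne', ← norm_eq_abs, ← sub_sub]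
    exact norm_sub_sub_fderiv_le_of_holder (convex_ball x0 r) (Metric.mem_ball_self hr) hxr hM
      hα.1.le (fun y hy => (hd y (hrΩ hy)).hasFDerivWithinAt)
      (fun y hy => by simpa [dist_eq_norm] using hH y (hrΩ hy) x0 hx0)
  have hdist := norm_sub_le_mul_ctrlDist hM (continuous_P1 hε.ne') (abs_P1_le hε.ne' (hbd x0 hx0))
    hε.ne' (by rw [abs_of_pos hε]; exact hε1.le)
    ((mem_ball_iff_norm.1 hxU).le.trans (min_le_right _ _))
  set d := ctrlDist (frozenField (P1 u Du ε x0)) (fun _ => (0, ε, 0)) (fun _ => (0, 0, 1))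
    (x.1, x.2, 0) (x0.1, x0.2, 0)
  have hd0 : 0 ≤ d := ctrlDist_nonneg _ _ _ _ _
  calc |u x - P1 u Du ε x0 x| ≤ M * ‖x - x0‖ ^ (1 + α) := htaylor
    _ ≤ M * (K * d) ^ (1 + α) := by gcongr; linarith [hα.1]
    _ = M * K ^ (1 + α) * d ^ (1 + α) := by rw [mul_rpow (by positivity) hd0, mul_assoc]
    _ ≤ (M + 1) * K ^ (1 + α) * d ^ (1 + α) := by
      have := rpow_nonneg hd0 (1 + α)
      gcongr
      linarith
end
end

section
/- If u is a smooth solution of Σ_i X_i( X_i u / √(1+|∇_ε u|²) ) = 0 on Ω, then v = ∂₂u solves X_i( a_{ij}(∇_ε u)/√(1+|∇_ε u|²) X_j v ) = −(a_{11}(∇_ε u)/√(1+|∇_ε u|²)) v³ − (a_{1j}(∇_ε u)/√(1+|∇_ε u|²)) v X_j v − X_i( (a_{i1}(∇_ε u)/√(1+|∇_ε u|²)) v² ) on Ω (summation over repeated indices i,j ∈ {1,2}). -/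
noncomputable section

/-- `X₁ = ∂₁ + u ∂₂` (for `i = 0`) and `X₂ = ε ∂₂` (for `i = 1`). -/
def Xop (u : ℝ × ℝ → ℝ) (ε : ℝ) (i : Fin 2) (f : ℝ × ℝ → ℝ) (p : ℝ × ℝ) : ℝ :=
  if i = 0 then fderiv ℝ f p (1, 0) + u p * fderiv ℝ f p (0, 1)
  else ε * fderiv ℝ f p (0, 1)

/-- `a_{ij}(v) = δ_{ij} − v_i v_j/(1+|v|²)`. -/
def Amat (v : ℝ × ℝ) (i j : Fin 2) : ℝ :=
  (if i = j then 1 else 0)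
    - (if i = 0 then v.1 else v.2) * (if j = 0 then v.1 else v.2) / (1 + v.1 ^ 2 + v.2 ^ 2)

/-- `√(1+|∇_ε u|²)`. -/
def Wgt (u : ℝ × ℝ → ℝ) (ε : ℝ) (q : ℝ × ℝ) : ℝ :=
  Real.sqrt (1 + (Xop u ε 0 u q) ^ 2 + (Xop u ε 1 u q) ^ 2)

/-- The coefficients `a_{ij}(∇_ε u)`. -/
def Acoef (u : ℝ × ℝ → ℝ) (ε : ℝ) (q : ℝ × ℝ) (i j : Fin 2) : ℝ :=
  Amat (Xop u ε 0 u q, Xop u ε 1 u q) i j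

/-! Differentiate the equation `Σᵢ Xᵢ Fᵢ = 0`, `Fᵢ = Xᵢu / W`, in the direction `∂₂`.
Since `∂₂` commutes with `X₂` and `[∂₂, X₁] = v ∂₂`, this gives `Σᵢ Xᵢ(∂₂Fᵢ) + v ∂₂F₁ = 0`.
The flux is `F = φ(∇_ε u)` with `φ(p) = p / √(1 + |p|²)`, whose Jacobian is `a(p) / √(1 + |p|²)`;
together with `∂₂(X₁u) = X₁v + v²` and `∂₂(X₂u) = X₂v` the chain rule yields
`∂₂Fᵢ = (aᵢⱼ/W) Xⱼv + (aᵢ₁/W) v²`, and substituting this is the claimed equation. -/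

open scoped ContDiff Topology

section Calculus

variable {E : Type*} [NormedAddCommGroup E] [NormedSpace ℝ E] {f : E → ℝ} {r : E}

theorem ContDiffAt.fderiv_apply_const (hf : ContDiffAt ℝ ∞ f r) (z : E) :
    ContDiffAt ℝ ∞ (fun w => fderiv ℝ f w z) r :=
  (hf.fderiv_right (by decide)).clm_apply contDiffAt_const

theorem ContDiffAt.differentiableAt_fderiv (hf : ContDiffAt ℝ 2 f r) :
    DifferentiableAt ℝ (fderiv ℝ f) r :=
  (hf.fderiv_right (m := 1) (by norm_num)).differentiableAt one_ne_zero

theorem fderiv_fderiv_apply_comm (hf : ContDiffAt ℝ 2 f r) (a b : E) :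
    fderiv ℝ (fun w => fderiv ℝ f w a) r b = fderiv ℝ (fun w => fderiv ℝ f w b) r a := by
  have hd := hf.differentiableAt_fderiv
  rw [fderiv_clm_apply hd (differentiableAt_const a), fderiv_clm_apply hd (differentiableAt_const b)]
  simpa using hf.isSymmSndFDerivAt (by simp [minSmoothness_of_isRCLikeNormedField]) b a

theorem fderiv_div_sqrt_one_add_sq {P Q R : E → ℝ} (hP : DifferentiableAt ℝ P r)
    (hQ : DifferentiableAt ℝ Q r) (hR : DifferentiableAt ℝ R r) (z : E) :
    fderiv ℝ (fun w => R w / √(1 + P w ^ 2 + Q w ^ 2)) r z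
      = (fderiv ℝ R r z - R r * (P r * fderiv ℝ P r z + Q r * fderiv ℝ Q r z)
          / (1 + P r ^ 2 + Q r ^ 2)) / √(1 + P r ^ 2 + Q r ^ 2) := by
  have hG : 0 < 1 + P r ^ 2 + Q r ^ 2 := by positivity
  have hW : HasFDerivAt (fun w => √(1 + P w ^ 2 + Q w ^ 2)) _ r :=
    (((hasFDerivAt_const 1 r).add (hP.hasFDerivAt.pow 2)).add (hQ.hasFDerivAt.pow 2)).sqrt hG.ne'
  have hF : HasFDerivAt (fun w => R w * (√(1 + P w ^ 2 + Q w ^ 2))⁻¹) _ r :=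
    hR.hasFDerivAt.mul ((hasDerivAt_inv (Real.sqrt_pos.2 hG).ne').comp_hasFDerivAt r hW)
  simp only [div_eq_mul_inv]
  rw [hF.fderiv]
  simp only [Pi.add_apply, one_div, mul_inv_rev, Nat.add_one_sub_one, pow_one, nsmul_eq_mul,
    Nat.cast_ofNat, zero_add, smul_add, neg_smul, smul_neg, add_apply, neg_apply, smul_apply,
    smul_eq_mul]
  field_simp
  rw [Real.sq_sqrt hG.le]
  ring

theorem sum_fderiv_eq_zero_of_eventually {ι : Type*} {s : Finset ι} {F : ι → E → ℝ}
    (hF : ∀ i ∈ s, DifferentiableAt ℝ (F i) r) (h : ∀ᶠ w in 𝓝 r, ∑ i ∈ s, F i w = 0) (z : E) :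
    ∑ i ∈ s, fderiv ℝ (F i) r z = 0 := by
  have hfun : (fun w => ∑ i ∈ s, F i w) =ᶠ[𝓝 r] fun _ => (0 : ℝ) := h
  simpa [fderiv_fun_sum hF] using DFunLike.congr_fun (hfun.fderiv_eq (𝕜 := ℝ)) z

end Calculus

section Xop

variable {u f g : ℝ × ℝ → ℝ} {ε : ℝ} {q : ℝ × ℝ}

theorem Xop_congr (h : f =ᶠ[𝓝 q] g) (i : Fin 2) : Xop u ε i f q = Xop u ε i g q := by
  simp only [Xop, h.fderiv_eq]

theorem Xop_add (hf : DifferentiableAt ℝ f q) (hg : DifferentiableAt ℝ g q) (i : Fin 2) :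
    Xop u ε i (fun r => f r + g r) q = Xop u ε i f q + Xop u ε i g q := by
  simp only [Xop, fderiv_fun_add hf hg, add_apply]
  split <;> ring

theorem Xop_sum {ι : Type*} (s : Finset ι) {F : ι → ℝ × ℝ → ℝ}
    (hF : ∀ j ∈ s, DifferentiableAt ℝ (F j) q) (i : Fin 2) :
    Xop u ε i (fun r => ∑ j ∈ s, F j r) q = ∑ j ∈ s, Xop u ε i (F j) q := by
  simp only [Xop, fderiv_fun_sum hF, sum_apply]
  split <;> simp [Finset.sum_add_distrib, Finset.mul_sum]

theorem ContDiffAt.Xop (hu : ContDiffAt ℝ ∞ u q) (hf : ContDiffAt ℝ ∞ f q) (i : Fin 2) :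
    ContDiffAt ℝ ∞ (Xop u ε i f) q := by
  fin_cases i
  · exact (hf.fderiv_apply_const _).add (hu.mul (hf.fderiv_apply_const _))
  · exact contDiffAt_const.mul (hf.fderiv_apply_const _)

theorem Wgt_pos (u : ℝ × ℝ → ℝ) (ε : ℝ) (q : ℝ × ℝ) : 0 < Wgt u ε q := by
  unfold Wgt
  positivity

theorem ContDiffAt.Wgt (hu : ContDiffAt ℝ ∞ u q) : ContDiffAt ℝ ∞ (Wgt u ε) q := by
  have h0 := hu.Xop hu (ε := ε) 0
  have h1 := hu.Xop hu (ε := ε) 1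
  unfold _root_.Wgt
  exact (contDiffAt_const.add (h0.pow 2)).add (h1.pow 2) |>.sqrt (by positivity)

theorem ContDiffAt.Acoef (hu : ContDiffAt ℝ ∞ u q) (i j : Fin 2) :
    ContDiffAt ℝ ∞ (fun r => Acoef u ε r i j) q := by
  have h0 := hu.Xop hu (ε := ε) 0
  have h1 := hu.Xop hu (ε := ε) 1
  unfold _root_.Acoef Amat
  fin_cases i <;> fin_cases j <;>
    simp only [Fin.zero_eta, Fin.mk_one, Fin.isValue, ↓reduceIte, zero_ne_one, one_ne_zero,
      zero_sub] <;>
    fun_prop (disch := positivity)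

theorem fderiv_Xop_zero_snd (hu : DifferentiableAt ℝ u q) (hf : ContDiffAt ℝ 2 f q) :
    fderiv ℝ (Xop u ε 0 f) q (0, 1)
      = Xop u ε 0 (fun w => fderiv ℝ f w (0, 1)) q
        + fderiv ℝ u q (0, 1) * fderiv ℝ f q (0, 1) := by
  have hd (z : ℝ × ℝ) : DifferentiableAt ℝ (fun w => fderiv ℝ f w z) q :=
    hf.differentiableAt_fderiv.clm_apply (differentiableAt_const z)
  have hX : Xop u ε 0 f = fun w => fderiv ℝ f w (1, 0) + u w * fderiv ℝ f w (0, 1) := rfl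
  rw [hX, fderiv_fun_add (hd _) (hu.fun_mul (hd _)), fderiv_fun_mul hu (hd _)]
  simp only [Xop, add_apply, smul_apply, smul_eq_mul, fderiv_fderiv_apply_comm hf (1, 0), if_true]
  ring

theorem fderiv_Xop_one_snd (hf : ContDiffAt ℝ 2 f q) :
    fderiv ℝ (Xop u ε 1 f) q (0, 1) = Xop u ε 1 (fun w => fderiv ℝ f w (0, 1)) q := by
  have hX : Xop u ε 1 f = fun w => ε * fderiv ℝ f w (0, 1) := rfl
  rw [hX, fderiv_const_mul (hf.differentiableAt_fderiv.clm_apply (differentiableAt_const _))]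
  rfl

theorem fderiv_Xop_div_Wgt_snd (hu : ContDiffAt ℝ ∞ u q) (i : Fin 2) :
    fderiv ℝ (fun w => Xop u ε i u w / Wgt u ε w) q (0, 1)
      = ∑ j : Fin 2, Acoef u ε q i j / Wgt u ε q * Xop u ε j (fun w => fderiv ℝ u w (0, 1)) q
        + Acoef u ε q i 0 / Wgt u ε q * fderiv ℝ u q (0, 1) ^ 2 := by
  have hu2 : ContDiffAt ℝ 2 u q := hu.of_le (by decide)
  have hX (k : Fin 2) : DifferentiableAt ℝ (Xop u ε k u) q :=
    (hu.Xop hu k).differentiableAt (by decide)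
  have h0 := fderiv_Xop_zero_snd (ε := ε) (hu2.differentiableAt (by decide)) hu2
  have h1 := fderiv_Xop_one_snd (u := u) (ε := ε) hu2
  unfold Wgt
  fin_cases i <;>
    rw [fderiv_div_sqrt_one_add_sq (hX 0) (hX 1) (hX _)] <;>
    simp only [Acoef, Amat, Fin.sum_univ_two, h0, h1, Fin.zero_eta, Fin.mk_one, Fin.isValue,
      ↓reduceIte, mul_ite, zero_ne_one, one_ne_zero, zero_sub] <;>
    field_simp <;>
    ring

theorem Xop_fderiv_Xop_div_Wgt_snd (hu : ∀ᶠ r in 𝓝 q, ContDiffAt ℝ ∞ u r) (i : Fin 2) :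
    Xop u ε i (fun r => fderiv ℝ (fun w => Xop u ε i u w / Wgt u ε w) r (0, 1)) q
      = ∑ j : Fin 2, Xop u ε i (fun r => Acoef u ε r i j / Wgt u ε r
          * Xop u ε j (fun w => fderiv ℝ u w (0, 1)) r) q
        + Xop u ε i (fun r => Acoef u ε r i 0 / Wgt u ε r * fderiv ℝ u r (0, 1) ^ 2) q := by
  have huq : ContDiffAt ℝ ∞ u q := hu.self_of_nhds
  have hW : Wgt u ε q ≠ 0 := (Wgt_pos u ε q).ne'
  have hv : ContDiffAt ℝ ∞ (fun w => fderiv ℝ u w (0, 1)) q := huq.fderiv_apply_const _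
  have hG (j : Fin 2) : DifferentiableAt ℝ
      (fun r => Acoef u ε r i j / Wgt u ε r * Xop u ε j (fun w => fderiv ℝ u w (0, 1)) r) q :=
    (((huq.Acoef i j).div huq.Wgt hW).mul (huq.Xop hv j)).differentiableAt (by decide)
  have hH : DifferentiableAt ℝ
      (fun r => Acoef u ε r i 0 / Wgt u ε r * fderiv ℝ u r (0, 1) ^ 2) q :=
    (((huq.Acoef i 0).div huq.Wgt hW).mul (hv.pow 2)).differentiableAt (by decide)
  rw [Xop_congr (hu.mono fun r hr => fderiv_Xop_div_Wgt_snd hr i),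
    Xop_add (DifferentiableAt.fun_sum fun j _ => hG j) hH, Xop_sum _ fun j _ => hG j]

end Xop

theorem derived_equation_for_v_general (Ω : Set (ℝ × ℝ)) (hΩ : IsOpen Ω)
    (ε : ℝ) (u : ℝ × ℝ → ℝ) (hu : ContDiffOn ℝ (⊤ : ℕ∞) u Ω)
    (hmin : ∀ q ∈ Ω, ∑ i : Fin 2, Xop u ε i (fun r => Xop u ε i u r / Wgt u ε r) q = 0) :
    ∀ q ∈ Ω,
      (∑ i : Fin 2, ∑ j : Fin 2,
        Xop u ε i (fun r => Acoef u ε r i j / Wgt u ε r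
          * Xop u ε j (fun w => fderiv ℝ u w (0, 1)) r) q)
      = -(Acoef u ε q 0 0 / Wgt u ε q) * (fderiv ℝ u q (0, 1)) ^ 3
        - (∑ j : Fin 2, (Acoef u ε q 0 j / Wgt u ε q) * fderiv ℝ u q (0, 1)
            * Xop u ε j (fun w => fderiv ℝ u w (0, 1)) q)
        - ∑ i : Fin 2, Xop u ε i
            (fun r => Acoef u ε r i 0 / Wgt u ε r * (fderiv ℝ u r (0, 1)) ^ 2) q := by
  intro q hq
  have hsmooth : ∀ᶠ r in 𝓝 q, ContDiffAt ℝ ∞ u r :=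
    Filter.eventually_of_mem (hΩ.mem_nhds hq) fun r hr => hu.contDiffAt (hΩ.mem_nhds hr)
  have huq : ContDiffAt ℝ ∞ u q := hsmooth.self_of_nhds
  have hF (i : Fin 2) : ContDiffAt ℝ ∞ (fun r => Xop u ε i u r / Wgt u ε r) q :=
    (huq.Xop huq i).div huq.Wgt (Wgt_pos u ε q).ne'
  have hdiff := sum_fderiv_eq_zero_of_eventually
    (fun i _ => (huq.Xop (hF i) i).differentiableAt (by decide))
    (Filter.eventually_of_mem (hΩ.mem_nhds hq) hmin) (0, 1)
  rw [Fin.sum_univ_two,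
    fderiv_Xop_zero_snd (huq.differentiableAt (by decide)) ((hF 0).of_le (by decide)),
    fderiv_Xop_one_snd ((hF 1).of_le (by decide)),
    Xop_fderiv_Xop_div_Wgt_snd hsmooth, Xop_fderiv_Xop_div_Wgt_snd hsmooth] at hdiff
  have h0 := fderiv_Xop_div_Wgt_snd (ε := ε) huq 0
  simp only [Fin.sum_univ_two] at hdiff h0 ⊢
  -- `v · ∂₂F₁`, the contribution of the commutator `[∂₂, X₁]`, expanded by `h0`
  linear_combination hdiff - fderiv ℝ u q (0, 1) * h0

/-- If `u` is a smooth solution of the approximating minimal surface equation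
`Σ_i X_i(X_i u / √(1+|∇_ε u|²)) = 0`, then `v = ∂₂u` solves
`X_i(a_{ij}(∇_ε u)/W · X_j v) = −(a_{11}/W) v³ − (a_{1j}/W) v X_j v − X_i((a_{i1}/W) v²)`. -/
theorem derived_equation_for_v (Ω : Set (ℝ × ℝ)) (hΩ : IsOpen Ω)
    (ε : ℝ) (hε : 0 < ε) (u : ℝ × ℝ → ℝ) (hu : ContDiffOn ℝ (⊤ : ℕ∞) u Ω)
    (hmin : ∀ q ∈ Ω, ∑ i : Fin 2, Xop u ε i (fun r => Xop u ε i u r / Wgt u ε r) q = 0) :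
    ∀ q ∈ Ω,
      (∑ i : Fin 2, ∑ j : Fin 2,
        Xop u ε i (fun r => Acoef u ε r i j / Wgt u ε r
          * Xop u ε j (fun w => fderiv ℝ u w (0, 1)) r) q)
      = -(Acoef u ε q 0 0 / Wgt u ε q) * (fderiv ℝ u q (0, 1)) ^ 3
        - (∑ j : Fin 2, (Acoef u ε q 0 j / Wgt u ε q) * fderiv ℝ u q (0, 1)
            * Xop u ε j (fun w => fderiv ℝ u w (0, 1)) q)
        - ∑ i : Fin 2, Xop u ε i
            (fun r => Acoef u ε r i 0 / Wgt u ε r * (fderiv ℝ u r (0, 1)) ^ 2) q :=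
  derived_equation_for_v_general Ω hΩ ε u hu hmin
end
end
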